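/- arXiv:2601.15827 — 3 statements merged into one kernel-verified Lean document; each statement's English description precedes it below -/
import Mathlib

section
/- Let A ∈ GL(2,ℤ) with 1 not an eigenvalue of A, and ā ∈ 𝕋². Then (A,ā) is reversible in G = GL(2,ℤ) ⋉ 𝕋² if and only if A is reversible in GL(2,ℤ). -/
/-!
Conjugating `(A, a)` by `(R, b)` gives `(R A R⁻¹, R a + (1 - R A R⁻¹) b)`. So the linear part of a
reversing element reverses `A`, and conversely, given `R` with `R A R⁻¹ = A⁻¹`, it remains to solve
`(1 - A⁻¹) b = -A⁻¹ a - R a` on the torus. This is possible because `1 - A⁻¹ = A⁻¹ (A - 1)` has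
nonzero determinant, and an integer matrix with nonzero determinant maps `𝕋²` onto itself.
-/

noncomputable section

abbrev V : Type := Fin 2 → ℝ

def L : AddSubgroup V where
  carrier := {x | ∀ i, ∃ n : ℤ, x i = (n : ℝ)}
  zero_mem' := fun i => ⟨0, by simp⟩
  add_mem' := by
    rintro a b ha hb i
    obtain ⟨m, hm⟩ := ha i
    obtain ⟨n, hn⟩ := hb i
    exact ⟨m + n, by simp [hm, hn]⟩
  neg_mem' := by
    rintro a ha i
    obtain ⟨m, hm⟩ := ha i
    exact ⟨-m, by simp [hm]⟩

abbrev T2 := V ⧸ L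

def actV (A : Matrix (Fin 2) (Fin 2) ℤ) : V →+ V :=
  (Matrix.mulVecLin (A.map (Int.cast : ℤ → ℝ))).toAddMonoidHom

lemma actV_mem (A : Matrix (Fin 2) (Fin 2) ℤ) : L ≤ L.comap (actV A) := by
  intro x hx
  show actV A x ∈ L
  intro i
  refine ⟨∑ j, A i j * Classical.choose (hx j), ?_⟩
  show (A.map (Int.cast : ℤ → ℝ)).mulVec x i = _
  simp only [Matrix.mulVec, dotProduct, Matrix.map_apply]
  push_cast
  exact Finset.sum_congr rfl fun j _ =>
    congrArg (fun t => ((A i j : ℝ)) * t) (Classical.choose_spec (hx j))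

/-- The action of an integer matrix on the torus `T2`. -/
def act (A : Matrix (Fin 2) (Fin 2) ℤ) : T2 →+ T2 :=
  QuotientAddGroup.map L L (actV A) (actV_mem A)

abbrev GL2 := (Matrix (Fin 2) (Fin 2) ℤ)ˣ

/-- Multiplication in the group `G = GL(2,ℤ) ⋉ 𝕋²`. -/
def Gmul (p q : GL2 × T2) : GL2 × T2 :=
  (p.1 * q.1, act (p.1 : Matrix (Fin 2) (Fin 2) ℤ) q.2 + p.2)

/-- Inversion in the group `G = GL(2,ℤ) ⋉ 𝕋²`. -/
def Ginv (p : GL2 × T2) : GL2 × T2 :=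
  (p.1⁻¹, -act ((p.1⁻¹ : GL2) : Matrix (Fin 2) (Fin 2) ℤ) p.2)

open Matrix

lemma act_mk (B : Matrix (Fin 2) (Fin 2) ℤ) (v : V) :
    act B (QuotientAddGroup.mk v) = QuotientAddGroup.mk (B.map (Int.cast : ℤ → ℝ) *ᵥ v) :=
  rfl

lemma act_mul (B C : Matrix (Fin 2) (Fin 2) ℤ) (x : T2) :
    act (B * C) x = act B (act C x) := by
  obtain ⟨v, rfl⟩ := QuotientAddGroup.mk_surjective x
  rw [act_mk, act_mk, act_mk, mulVec_mulVec]
  exact congrArg (fun M => QuotientAddGroup.mk (M *ᵥ v)) (Matrix.map_mul (f := Int.castRingHom ℝ))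

lemma act_one (x : T2) : act 1 x = x := by
  obtain ⟨v, rfl⟩ := QuotientAddGroup.mk_surjective x
  rw [act_mk, Matrix.map_one _ Int.cast_zero Int.cast_one, one_mulVec]

lemma act_sub (B C : Matrix (Fin 2) (Fin 2) ℤ) (x : T2) :
    act (B - C) x = act B x - act C x := by
  obtain ⟨v, rfl⟩ := QuotientAddGroup.mk_surjective x
  rw [act_mk, act_mk, act_mk, Matrix.map_sub _ Int.cast_sub, sub_mulVec, QuotientAddGroup.mk_sub]

lemma act_surjective {B : Matrix (Fin 2) (Fin 2) ℤ} (hB : B.det ≠ 0) :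
    Function.Surjective (act B) := by
  have hdet : IsUnit (B.map (Int.cast : ℤ → ℝ)).det := by
    rw [← Int.cast_det]
    exact isUnit_iff_ne_zero.mpr (Int.cast_ne_zero.mpr hB)
  rintro ⟨v⟩
  obtain ⟨w, hw⟩ := mulVec_surjective_iff_isUnit.mpr ((isUnit_iff_isUnit_det _).mpr hdet) v
  exact ⟨QuotientAddGroup.mk w, congrArg _ hw⟩

lemma det_one_sub_inv_ne_zero {A : GL2} (hD : ((A : Matrix (Fin 2) (Fin 2) ℤ) - 1).det ≠ 0) :
    (1 - ((A⁻¹ : GL2) : Matrix (Fin 2) (Fin 2) ℤ)).det ≠ 0 := by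
  have hfac : ((A⁻¹ : GL2) : Matrix (Fin 2) (Fin 2) ℤ) * ((A : Matrix (Fin 2) (Fin 2) ℤ) - 1) =
      1 - ((A⁻¹ : GL2) : Matrix (Fin 2) (Fin 2) ℤ) := by
    rw [Matrix.mul_sub, ← Units.val_mul, inv_mul_cancel, Units.val_one, Matrix.mul_one]
  rw [← hfac, det_mul]
  exact mul_ne_zero ((isUnit_iff_isUnit_det _).mp (A⁻¹).isUnit).ne_zero hD

lemma Gmul_Gmul_Ginv (R A : GL2) (b a : T2) :
    Gmul (Gmul (R, b) (A, a)) (Ginv (R, b)) =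
      (R * A * R⁻¹, act R a + act (1 - ((R * A * R⁻¹ : GL2) : Matrix (Fin 2) (Fin 2) ℤ)) b) := by
  refine Prod.ext rfl ?_
  simp only [Gmul, Ginv, map_neg, ← act_mul, ← Units.val_mul, act_sub, act_one]
  abel

/-- If `1` is not an eigenvalue of `A ∈ GL(2,ℤ)`, then `(A,ā)` is reversible in
`G = GL(2,ℤ) ⋉ 𝕋²` iff `A` is reversible in `GL(2,ℤ)`. -/
theorem reversible_iff_linear_reversible (A : GL2) (a : T2)
    (hD : ((A : Matrix (Fin 2) (Fin 2) ℤ) - 1).det ≠ 0) :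
    (∃ h : GL2 × T2, Gmul (Gmul h (A, a)) (Ginv h) = Ginv (A, a)) ↔
    (∃ R : GL2, R * A * R⁻¹ = A⁻¹) := by
  constructor
  · rintro ⟨⟨R, b⟩, hRb⟩
    exact ⟨R, congrArg Prod.fst hRb⟩
  · rintro ⟨R, hR⟩
    obtain ⟨b, hb⟩ := act_surjective (det_one_sub_inv_ne_zero hD)
      (-act ((A⁻¹ : GL2) : Matrix (Fin 2) (Fin 2) ℤ) a - act R a)
    refine ⟨(R, b), ?_⟩
    rw [Gmul_Gmul_Ginv, hR, hb, Ginv]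
    congr 1
    abel
end
end

section
/- Every involution in GL(2,ℤ) other than the identity is conjugate in GL(2,ℤ) to one of the matrices −I, [[0,1],[1,0]], or [[1,0],[0,−1]]. -/
/-!
An involution `R ≠ ±1` of `ℤ²` has trace `0`, by Cayley–Hamilton. Since `R (R + 1) = R + 1`,
a nonzero column of `R + 1` is fixed by `R`; dividing it by the gcd of its entries gives a
primitive fixed vector. Completing it to a basis of `ℤ²` puts `R` in the form
`[[1, t], [0, -1]]`.
Conjugating by `[[1, k], [0, 1]]` replaces `t` by `t - 2k`, so only the parity of `t` matters:
`t = 0` is `diag(1, -1)`, and `t = 1` is conjugate to the swap `[[0, 1], [1, 0]]`.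
-/

open Matrix

theorem isConj_of_mul_mul_eq {M : Type*} [Monoid M] [IsDedekindFiniteMonoid M] {a b p q : M}
    (hqp : q * p = 1) (h : q * a * p = b) : IsConj a b :=
  ⟨⟨q, p, hqp, mul_eq_one_comm.mp hqp⟩, by
    change q * a = b * q
    rw [← h, mul_assoc _ p, mul_eq_one_comm.mp hqp, mul_one]⟩

theorem Units.exists_conj_eq_of_isConj {M : Type*} [Monoid M] {u : Mˣ} {b : M}
    (h : IsConj (u : M) b) : ∃ c : Mˣ, ((c * u * c⁻¹ : Mˣ) : M) = b := by
  obtain ⟨c, hc⟩ := h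
  exact ⟨c, by rw [Units.val_mul, Units.val_mul, hc.eq, Units.mul_inv_cancel_right]⟩

namespace Matrix

variable {K : Type*} [CommRing K]

theorem eq_one_or_eq_neg_one_or_trace_eq_zero_of_mul_self_eq_one [NoZeroDivisors K]
    {M : Matrix (Fin 2) (Fin 2) K} (hM : M * M = 1) : M = 1 ∨ M = -1 ∨ M.trace = 0 := by
  obtain ⟨a, b, c, d, rfl⟩ : ∃ a b c d, M = !![a, b; c, d] := ⟨_, _, _, _, eta_fin_two M⟩
  simp only [mul_fin_two, one_fin_two, EmbeddingLike.apply_eq_iff_eq, vecCons_inj,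
    and_true] at hM
  obtain ⟨⟨haa, hab⟩, hca, hdd⟩ := hM
  rw [trace_fin_two_of]
  rcases eq_or_ne (a + d) 0 with htr | htr
  · exact Or.inr (Or.inr htr)
  have hb : b = 0 :=
    (mul_eq_zero.mp (by linear_combination hab : b * (a + d) = 0)).resolve_right htr
  have hc : c = 0 :=
    (mul_eq_zero.mp (by linear_combination hca : c * (a + d) = 0)).resolve_right htr
  have hda : d = a := by
    have : (d - a) * (a + d) = 0 := by linear_combination hdd - haa
    exact sub_eq_zero.mp ((mul_eq_zero.mp this).resolve_right htr)
  subst hb hc hda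
  rcases mul_self_eq_one_iff.mp (by simpa using haa) with rfl | rfl
  · exact Or.inl one_fin_two.symm
  · exact Or.inr (Or.inl (by simp [one_fin_two]))

theorem exists_mulVec_eq_self_of_mul_self_eq_one {n : Type*} [Fintype n] [DecidableEq n]
    {M : Matrix n n K} (hM : M * M = 1) (hne : M ≠ -1) : ∃ v ≠ 0, M *ᵥ v = v := by
  obtain ⟨x, hx⟩ : ∃ x, (M + 1) *ᵥ x ≠ 0 := by
    by_contra! h
    exact hne (eq_neg_of_add_eq_zero_left (ext_iff_mulVec.mpr fun x => by simp [h x]))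
  refine ⟨_, hx, ?_⟩
  rw [mulVec_mulVec, mul_add, hM, mul_one, add_comm]

theorem exists_isConj_triangular_of_mulVec_eq_self {M : Matrix (Fin 2) (Fin 2) K}
    (htr : M.trace = 0) {v : Fin 2 → K} (hv : IsCoprime (v 0) (v 1)) (hfix : M *ᵥ v = v) :
    ∃ t, IsConj M !![1, t; 0, -1] := by
  obtain ⟨x, y, hxy⟩ := hv
  obtain ⟨a, b, c, d, rfl⟩ : ∃ a b c d, M = !![a, b; c, d] := ⟨_, _, _, _, eta_fin_two M⟩
  set p := v 0
  set q := v 1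
  have hfix0 : a * p + b * q = p := by simpa [mulVec, dotProduct] using congrFun hfix 0
  have hfix1 : c * p + d * q = q := by simpa [mulVec, dotProduct] using congrFun hfix 1
  rw [trace_fin_two_of] at htr
  -- `x p + y q = 1`, so `v` and `(-y, x)` form a basis, in which `v` is the first basis vector.
  refine ⟨x * (b * x - a * y) + y * (d * x - c * y),
    isConj_of_mul_mul_eq (q := !![x, y; -q, p]) (p := !![p, -y; q, x]) ?_ ?_⟩
  · simp only [mul_fin_two, one_fin_two, EmbeddingLike.apply_eq_iff_eq, vecCons_inj, and_true]
    refine ⟨⟨?_, ?_⟩, ?_, ?_⟩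
    · linear_combination hxy
    · ring
    · ring
    · linear_combination hxy
  · simp only [mul_fin_two, EmbeddingLike.apply_eq_iff_eq, vecCons_inj, and_true]
    refine ⟨⟨?_, ?_⟩, ?_, ?_⟩
    · linear_combination x * hfix0 + y * hfix1 + hxy
    · ring
    · linear_combination -q * hfix0 + p * hfix1
    · linear_combination -x * hfix0 - y * hfix1 - hxy + (p * x + q * y) * htr

theorem isConj_triangular_sub_two_mul (t k : K) :
    IsConj !![1, t; 0, -1] !![1, t - 2 * k; 0, -1] := by
  refine isConj_of_mul_mul_eq (q := !![1, k; 0, 1]) (p := !![1, -k; 0, 1]) ?_ ?_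
  · simp [one_fin_two]
  · simp only [mul_fin_two, EmbeddingLike.apply_eq_iff_eq, vecCons_inj, and_true]
    refine ⟨⟨?_, ?_⟩, ?_, ?_⟩ <;> ring

theorem isConj_triangular_one_swap :
    IsConj (!![1, 1; 0, -1] : Matrix (Fin 2) (Fin 2) K) !![0, 1; 1, 0] :=
  isConj_of_mul_mul_eq (q := !![1, 0; 1, 1]) (p := !![1, 0; -1, 1])
    (by simp [one_fin_two]) (by simp)

end Matrix

theorem Int.exists_isCoprime_smul_eq {v : Fin 2 → ℤ} (hv : v ≠ 0) :
    ∃ g ≠ (0 : ℤ), ∃ w : Fin 2 → ℤ, IsCoprime (w 0) (w 1) ∧ v = g • w := by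
  have hgcd : 0 < Int.gcd (v 0) (v 1) := by
    refine Int.gcd_pos_iff.mpr ?_
    contrapose! hv
    ext i
    fin_cases i <;> simp [hv.1, hv.2]
  obtain ⟨g, p, q, hg, hpq, hp, hq⟩ := Int.exists_gcd_one' hgcd
  refine ⟨g, by exact_mod_cast hg.ne', ![p, q], Int.isCoprime_iff_gcd_eq_one.mpr hpq, ?_⟩
  ext i
  fin_cases i <;> simp [hp, hq, mul_comm]

theorem Int.exists_isCoprime_mulVec_eq_self {M : Matrix (Fin 2) (Fin 2) ℤ} (hM : M * M = 1)
    (hne : M ≠ -1) : ∃ v : Fin 2 → ℤ, IsCoprime (v 0) (v 1) ∧ M *ᵥ v = v := by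
  obtain ⟨v, hv, hfix⟩ := Matrix.exists_mulVec_eq_self_of_mul_self_eq_one hM hne
  obtain ⟨g, hg, w, hw, rfl⟩ := Int.exists_isCoprime_smul_eq hv
  refine ⟨w, hw, smul_right_injective _ hg ?_⟩
  rwa [Matrix.mulVec_smul] at hfix

theorem Int.isConj_triangular_diagonal_or_swap (t : ℤ) :
    IsConj !![1, t; 0, -1] !![1, 0; 0, -1] ∨ IsConj !![1, t; 0, -1] !![0, 1; 1, 0] := by
  obtain ⟨k, rfl | rfl⟩ := Int.even_or_odd' t
  · left
    simpa using Matrix.isConj_triangular_sub_two_mul (2 * k) k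
  · right
    refine .trans ?_ Matrix.isConj_triangular_one_swap
    simpa using Matrix.isConj_triangular_sub_two_mul (2 * k + 1) k

/-- Every involution in `GL(2,ℤ)` other than the identity is conjugate to one of
`-I`, `[[0,1],[1,0]]`, `[[1,0],[0,-1]]`. -/
theorem involution_classification (R : (Matrix (Fin 2) (Fin 2) ℤ)ˣ)
    (hR : R * R = 1) (hne : R ≠ 1) :
    ∃ C : (Matrix (Fin 2) (Fin 2) ℤ)ˣ,
      ((C * R * C⁻¹ : (Matrix (Fin 2) (Fin 2) ℤ)ˣ) : Matrix (Fin 2) (Fin 2) ℤ) = -1 ∨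
      ((C * R * C⁻¹ : (Matrix (Fin 2) (Fin 2) ℤ)ˣ) : Matrix (Fin 2) (Fin 2) ℤ) =
        !![0, 1; 1, 0] ∨
      ((C * R * C⁻¹ : (Matrix (Fin 2) (Fin 2) ℤ)ˣ) : Matrix (Fin 2) (Fin 2) ℤ) =
        !![1, 0; 0, -1] := by
  have hM : (R : Matrix (Fin 2) (Fin 2) ℤ) * R = 1 := by rw [← Units.val_mul, hR, Units.val_one]
  rcases Matrix.eq_one_or_eq_neg_one_or_trace_eq_zero_of_mul_self_eq_one hM with h1 | hneg | htr
  · exact absurd (Units.ext h1) hne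
  · exact ⟨1, Or.inl (by simp [hneg])⟩
  have hne' : (R : Matrix (Fin 2) (Fin 2) ℤ) ≠ -1 := by
    rintro h
    simp [h] at htr
  obtain ⟨v, hv, hfix⟩ := Int.exists_isCoprime_mulVec_eq_self hM hne'
  obtain ⟨t, ht⟩ := Matrix.exists_isConj_triangular_of_mulVec_eq_self htr hv hfix
  rcases Int.isConj_triangular_diagonal_or_swap t with h | h
  · obtain ⟨C, hC⟩ := Units.exists_conj_eq_of_isConj (ht.trans h)
    exact ⟨C, Or.inr (Or.inr hC)⟩
  · obtain ⟨C, hC⟩ := Units.exists_conj_eq_of_isConj (ht.trans h)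
    exact ⟨C, Or.inr (Or.inl hC)⟩
end

section
/- Let A ∈ GL(2,ℤ) with det(A) = −1. Then A is reversible in GL(2,ℤ) (conjugate to its inverse) if and only if A² = I. -/
/-!
Conjugation preserves the trace, so a reversible `A` has `tr A⁻¹ = tr A`. For a `2 × 2` matrix
`A⁻¹ = (det A)⁻¹ • adj A` and `tr (adj A) = tr A`, so `det A = -1` forces `tr A⁻¹ = -tr A`, hence
`tr A = 0`. Cayley–Hamilton, `A² = (tr A) A - (det A) I`, then gives `A² = I`.
-/

namespace Matrix

variable {R : Type*} [CommRing R]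

theorem trace_adjugate_fin_two (A : Matrix (Fin 2) (Fin 2) R) : A.adjugate.trace = A.trace := by
  rw [adjugate_fin_two, trace_fin_two_of, trace_fin_two, add_comm]

theorem det_mul_trace_inv_fin_two (A : Matrix (Fin 2) (Fin 2) R) (h : IsUnit A.det) :
    A.det * A⁻¹.trace = A.trace := by
  rw [inv_def, trace_smul, smul_eq_mul, ← mul_assoc, Ring.mul_inverse_cancel _ h, one_mul,
    trace_adjugate_fin_two]

theorem sq_eq_trace_smul_sub_det_smul_fin_two (A : Matrix (Fin 2) (Fin 2) R) :
    A ^ 2 = A.trace • A - A.det • (1 : Matrix (Fin 2) (Fin 2) R) := by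
  ext i j
  fin_cases i <;> fin_cases j <;>
    simp [sq, mul_apply, Fin.sum_univ_two, trace_fin_two, det_fin_two] <;> ring

theorem sq_eq_one_of_trace_eq_zero_of_det_eq_neg_one {A : Matrix (Fin 2) (Fin 2) R}
    (htr : A.trace = 0) (hdet : A.det = -1) : A ^ 2 = 1 := by
  rw [sq_eq_trace_smul_sub_det_smul_fin_two, htr, hdet, zero_smul, zero_sub, neg_smul, one_smul,
    neg_neg]

theorem trace_inv_eq_trace_of_conj {n : Type*} [Fintype n] [DecidableEq n]
    {A P : (Matrix n n R)ˣ} (h : P * A * P⁻¹ = A⁻¹) :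
    (A : Matrix n n R)⁻¹.trace = (A : Matrix n n R).trace := by
  rw [← coe_units_inv, ← h, Units.val_mul, Units.val_mul, trace_units_conj]

end Matrix

/-- For `A ∈ GL(2,ℤ)` with `det A = -1`, `A` is reversible in `GL(2,ℤ)` iff `A² = I`. -/
theorem reversible_det_neg_one (A : (Matrix (Fin 2) (Fin 2) ℤ)ˣ)
    (hdet : (A : Matrix (Fin 2) (Fin 2) ℤ).det = -1) :
    (∃ R : (Matrix (Fin 2) (Fin 2) ℤ)ˣ, R * A * R⁻¹ = A⁻¹) ↔ A * A = 1 := by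
  constructor
  · rintro ⟨R, hR⟩
    have htr_inv :=
      Matrix.det_mul_trace_inv_fin_two (A : Matrix (Fin 2) (Fin 2) ℤ) (by simp [hdet])
    rw [hdet, Matrix.trace_inv_eq_trace_of_conj hR] at htr_inv
    have htr : (A : Matrix (Fin 2) (Fin 2) ℤ).trace = 0 := by linarith
    have hsq := Matrix.sq_eq_one_of_trace_eq_zero_of_det_eq_neg_one htr hdet
    exact Units.ext (by simpa [sq] using hsq)
  · intro h
    exact ⟨1, by rw [one_mul, inv_one, mul_one, inv_eq_of_mul_eq_one_right h]⟩
end
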